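/- arXiv:1807.00415 — 3 statements merged into one kernel-verified Lean document; each statement's English description precedes it below -/
import Mathlib

section
/- For all λ, λ', μ, μ' ∈ V one has the factorization identity S(λ, λ'; μ, μ') · S(0, 0; μ, μ') = S(λ, 0; μ, μ') · S(0, λ'; μ, μ'). (Equivalently, whenever the denominators are nonzero, the normalized S-matrix ratio satisfies S^χ_{(λ,λ'),(μ,μ')} / S^χ_{(0,0),(μ,μ')} = (S^χ_{(λ,0),(μ,μ')} / S^χ_{(0,0),(μ,μ')}) · (S^χ_{(0,λ'),(μ,μ')} / S^χ_{(0,0),(μ,μ')}); this is the key computation in the proof of Theorem 6.1 yielding the fusion rule L_k(λ, 0) ⊠ L_k(0, λ') ≅ L_k(λ, λ') for the rational principal W-algebra.) -/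
open scoped BigOperators

/-- The Weyl character sum `χ_μ(c; λ) = ∑_{w ∈ W} ε(w) exp(-2πi c ⟪λ+ρ, w(μ+ρ)⟫)`. -/
noncomputable def chi {V : Type*} [NormedAddCommGroup V] [InnerProductSpace ℝ V]
    (W : Subgroup (V ≃ₗᵢ[ℝ] V)) [Fintype W] (ε : W →* ℤˣ) (ρ : V)
    (c : ℝ) (μ lam : V) : ℂ :=
  ∑ w : W, ((ε w : ℤ) : ℂ) *
    Complex.exp ((-2) * (Real.pi : ℂ) * Complex.I * (c : ℂ) *
      ((inner ℝ (lam + ρ) ((w : V ≃ₗᵢ[ℝ] V) (μ + ρ)) : ℝ) : ℂ))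

/-- The (unnormalized Kac–Wakimoto) W-algebra `S`-matrix entry
`S(λ, λ'; μ, μ') = exp(2πi(⟪λ+ρ, μ'+ρ⟫ + ⟪λ'+ρ, μ+ρ⟫)) · χ_μ(c; λ) · χ_{μ'}(c'; λ')`. -/
noncomputable def Smat {V : Type*} [NormedAddCommGroup V] [InnerProductSpace ℝ V]
    (W : Subgroup (V ≃ₗᵢ[ℝ] V)) [Fintype W] (ε : W →* ℤˣ) (ρ : V)
    (c c' : ℝ) (lam lam' μ μ' : V) : ℂ :=
  Complex.exp (2 * (Real.pi : ℂ) * Complex.I *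
      (((inner ℝ (lam + ρ) (μ' + ρ) : ℝ) : ℂ) + ((inner ℝ (lam' + ρ) (μ + ρ) : ℝ) : ℂ))) *
    chi W ε ρ c μ lam * chi W ε ρ c' μ' lam'

theorem Smat_eq_mul {V : Type*} [NormedAddCommGroup V] [InnerProductSpace ℝ V]
    (W : Subgroup (V ≃ₗᵢ[ℝ] V)) [Fintype W] (ε : W →* ℤˣ) (ρ : V)
    (c c' : ℝ) (lam lam' μ μ' : V) :
    Smat W ε ρ c c' lam lam' μ μ' =
      (Complex.exp (2 * (Real.pi : ℂ) * Complex.I * ((inner ℝ (lam + ρ) (μ' + ρ) : ℝ) : ℂ)) *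
          chi W ε ρ c μ lam) *
        (Complex.exp (2 * (Real.pi : ℂ) * Complex.I * ((inner ℝ (lam' + ρ) (μ + ρ) : ℝ) : ℂ)) *
          chi W ε ρ c' μ' lam') := by
  rw [Smat, mul_add, Complex.exp_add]
  ring

theorem Smat_factorization_general {V : Type*} [NormedAddCommGroup V] [InnerProductSpace ℝ V]
    (W : Subgroup (V ≃ₗᵢ[ℝ] V)) [Fintype W] (ε : W →* ℤˣ) (ρ : V) (c c' : ℝ) :
    ∀ lam lam' μ μ' : V,
      Smat W ε ρ c c' lam lam' μ μ' * Smat W ε ρ c c' 0 0 μ μ'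
        = Smat W ε ρ c c' lam 0 μ μ' * Smat W ε ρ c c' 0 lam' μ μ' := by
  intro lam lam' μ μ'
  simp only [Smat_eq_mul]
  ring

/-- Factorization identity for the Kac–Wakimoto W-algebra `S`-matrix:
`S(λ, λ'; μ, μ') · S(0, 0; μ, μ') = S(λ, 0; μ, μ') · S(0, λ'; μ, μ')`. -/
theorem Smat_factorization {V : Type*} [NormedAddCommGroup V] [InnerProductSpace ℝ V]
    [FiniteDimensional ℝ V]
    (W : Subgroup (V ≃ₗᵢ[ℝ] V)) [Fintype W] (ε : W →* ℤˣ) (ρ : V) (c c' : ℝ) :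
    ∀ lam lam' μ μ' : V,
      Smat W ε ρ c c' lam lam' μ μ' * Smat W ε ρ c c' 0 0 μ μ'
        = Smat W ε ρ c c' lam 0 μ μ' * Smat W ε ρ c c' 0 lam' μ μ' :=
  Smat_factorization_general W ε ρ c c'
end

section
/- Let λ, μ ∈ V and c ∈ ℝ, and assume that for every w ∈ W both ⟪λ + ρ, w(μ + ρ) - (μ + ρ)⟫ ∈ ℤ and ⟪ρ, w(μ + ρ) - (μ + ρ)⟫ ∈ ℤ. Then exp(2πi⟪λ, ρ⟫) · χ_μ(c + 1; λ) · χ_μ(c; 0) = exp(-2πi⟪λ, μ⟫) · χ_μ(c; λ) · χ_μ(c + 1; 0). In particular, if χ_μ(c; 0) ≠ 0 and χ_μ(c + 1; 0) ≠ 0, then exp(2πi⟪λ, ρ⟫) · χ_μ(c + 1; λ)/χ_μ(c + 1; 0) = exp(-2πi⟪λ, μ⟫) · χ_μ(c; λ)/χ_μ(c; 0). (With c = v/u this is the computation in the proof of Theorem 8.1 identifying the normalized Hopf links of the W-algebra at shifted level with e^{-2πi(μ,λ)} times the normalized character S-matrix ratio χ_μ(e(-v/u); λ)/χ_μ(e(-v/u);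 0) of the admissible affine vertex algebra.) -/
open scoped BigOperators

/-- Since `⟪λ+ρ, w(μ+ρ)⟫ ≡ ⟪λ+ρ, μ+ρ⟫ mod ℤ`, shifting `c` by one multiplies every term by
the same phase. -/
theorem chi_add_one {V : Type*} [NormedAddCommGroup V] [InnerProductSpace ℝ V]
    (W : Subgroup (V ≃ₗᵢ[ℝ] V)) [Fintype W] (ε : W →* ℤˣ) (ρ lam μ : V) (c : ℝ)
    (h : ∀ w : W, ∃ n : ℤ,
      (inner ℝ (lam + ρ) ((w : V ≃ₗᵢ[ℝ] V) (μ + ρ) - (μ + ρ)) : ℝ) = n) :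
    chi W ε ρ (c + 1) μ lam
      = Complex.exp ((-2) * (Real.pi : ℂ) * Complex.I *
          ((inner ℝ (lam + ρ) (μ + ρ) : ℝ) : ℂ)) * chi W ε ρ c μ lam := by
  rw [chi, chi, Finset.mul_sum]
  refine Finset.sum_congr rfl fun w _ => ?_
  obtain ⟨n, hn⟩ := h w
  set a : ℝ := inner ℝ (lam + ρ) (μ + ρ)
  have hpair : (inner ℝ (lam + ρ) ((w : V ≃ₗᵢ[ℝ] V) (μ + ρ)) : ℝ) = a + n := by
    rw [← hn, inner_sub_right]; ring
  have hexponent : (-2) * (Real.pi : ℂ) * Complex.I * ((c + 1 : ℝ) : ℂ) * ((a + n : ℝ) : ℂ)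
      = ((-2) * (Real.pi : ℂ) * Complex.I * (a : ℂ)
          + (-2) * (Real.pi : ℂ) * Complex.I * (c : ℂ) * ((a + n : ℝ) : ℂ))
        + ((-n : ℤ) : ℂ) * (2 * (Real.pi : ℂ) * Complex.I) := by
    push_cast; ring
  rw [hpair, hexponent, Complex.exp_add, Complex.exp_int_mul_two_pi_mul_I, mul_one,
    Complex.exp_add]
  ring

theorem chi_shift_ratio_general {V : Type*} [NormedAddCommGroup V] [InnerProductSpace ℝ V]
    (W : Subgroup (V ≃ₗᵢ[ℝ] V)) [Fintype W] (ε : W →* ℤˣ) (ρ : V)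
    (lam μ : V) (c : ℝ)
    (hint₁ : ∀ w : W, ∃ n : ℤ,
      (inner ℝ (lam + ρ) ((w : V ≃ₗᵢ[ℝ] V) (μ + ρ) - (μ + ρ)) : ℝ) = n)
    (hint₂ : ∀ w : W, ∃ n : ℤ,
      (inner ℝ ρ ((w : V ≃ₗᵢ[ℝ] V) (μ + ρ) - (μ + ρ)) : ℝ) = n) :
    Complex.exp (2 * (Real.pi : ℂ) * Complex.I * ((inner ℝ lam ρ : ℝ) : ℂ)) *
          chi W ε ρ (c + 1) μ lam * chi W ε ρ c μ 0
        = Complex.exp ((-2) * (Real.pi : ℂ) * Complex.I * ((inner ℝ lam μ : ℝ) : ℂ)) *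
            chi W ε ρ c μ lam * chi W ε ρ (c + 1) μ 0
      ∧ (chi W ε ρ c μ 0 ≠ 0 → chi W ε ρ (c + 1) μ 0 ≠ 0 →
          Complex.exp (2 * (Real.pi : ℂ) * Complex.I * ((inner ℝ lam ρ : ℝ) : ℂ)) *
              (chi W ε ρ (c + 1) μ lam / chi W ε ρ (c + 1) μ 0)
            = Complex.exp ((-2) * (Real.pi : ℂ) * Complex.I * ((inner ℝ lam μ : ℝ) : ℂ)) *
                (chi W ε ρ c μ lam / chi W ε ρ c μ 0)) := by
  have hshift_lam := chi_add_one W ε ρ lam μ c hint₁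
  have hshift_zero := chi_add_one W ε ρ 0 μ c (by simpa only [zero_add] using hint₂)
  rw [zero_add] at hshift_zero
  -- `⟪λ+ρ, μ+ρ⟫ - ⟪ρ, μ+ρ⟫ = ⟪λ, μ⟫ + ⟪λ, ρ⟫`, so the two phases differ by the prefactors.
  have hphase : Complex.exp (2 * (Real.pi : ℂ) * Complex.I * ((inner ℝ lam ρ : ℝ) : ℂ)) *
        Complex.exp ((-2) * (Real.pi : ℂ) * Complex.I * ((inner ℝ (lam + ρ) (μ + ρ) : ℝ) : ℂ))
      = Complex.exp ((-2) * (Real.pi : ℂ) * Complex.I * ((inner ℝ lam μ : ℝ) : ℂ)) *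
        Complex.exp ((-2) * (Real.pi : ℂ) * Complex.I * ((inner ℝ ρ (μ + ρ) : ℝ) : ℂ)) := by
    rw [← Complex.exp_add, ← Complex.exp_add]
    congr 1
    simp only [inner_add_left, inner_add_right]
    push_cast; ring
  have hproduct : Complex.exp (2 * (Real.pi : ℂ) * Complex.I * ((inner ℝ lam ρ : ℝ) : ℂ)) *
          chi W ε ρ (c + 1) μ lam * chi W ε ρ c μ 0
        = Complex.exp ((-2) * (Real.pi : ℂ) * Complex.I * ((inner ℝ lam μ : ℝ) : ℂ)) *
            chi W ε ρ c μ lam * chi W ε ρ (c + 1) μ 0 := by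
    rw [hshift_lam, hshift_zero]
    linear_combination (chi W ε ρ c μ lam * chi W ε ρ c μ 0) * hphase
  refine ⟨hproduct, fun hc hc₁ => ?_⟩
  rw [← mul_div_assoc, ← mul_div_assoc, div_eq_div_iff hc₁ hc]
  linear_combination hproduct

/-- If `⟪λ+ρ, w(μ+ρ)-(μ+ρ)⟫ ∈ ℤ` and `⟪ρ, w(μ+ρ)-(μ+ρ)⟫ ∈ ℤ` for every `w ∈ W`, then
`e^{2πi⟪λ,ρ⟫} χ_μ(c+1; λ) χ_μ(c; 0) = e^{-2πi⟪λ,μ⟫} χ_μ(c; λ) χ_μ(c+1; 0)`; in particular,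
when the denominators are nonzero,
`e^{2πi⟪λ,ρ⟫} χ_μ(c+1; λ)/χ_μ(c+1; 0) = e^{-2πi⟪λ,μ⟫} χ_μ(c; λ)/χ_μ(c; 0)`. -/
theorem chi_shift_ratio {V : Type*} [NormedAddCommGroup V] [InnerProductSpace ℝ V]
    [FiniteDimensional ℝ V]
    (W : Subgroup (V ≃ₗᵢ[ℝ] V)) [Fintype W] (ε : W →* ℤˣ) (ρ : V)
    (lam μ : V) (c : ℝ)
    (hint₁ : ∀ w : W, ∃ n : ℤ,
      (inner ℝ (lam + ρ) ((w : V ≃ₗᵢ[ℝ] V) (μ + ρ) - (μ + ρ)) : ℝ) = n)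
    (hint₂ : ∀ w : W, ∃ n : ℤ,
      (inner ℝ ρ ((w : V ≃ₗᵢ[ℝ] V) (μ + ρ) - (μ + ρ)) : ℝ) = n) :
    Complex.exp (2 * (Real.pi : ℂ) * Complex.I * ((inner ℝ lam ρ : ℝ) : ℂ)) *
          chi W ε ρ (c + 1) μ lam * chi W ε ρ c μ 0
        = Complex.exp ((-2) * (Real.pi : ℂ) * Complex.I * ((inner ℝ lam μ : ℝ) : ℂ)) *
            chi W ε ρ c μ lam * chi W ε ρ (c + 1) μ 0
      ∧ (chi W ε ρ c μ 0 ≠ 0 → chi W ε ρ (c + 1) μ 0 ≠ 0 →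
          Complex.exp (2 * (Real.pi : ℂ) * Complex.I * ((inner ℝ lam ρ : ℝ) : ℂ)) *
              (chi W ε ρ (c + 1) μ lam / chi W ε ρ (c + 1) μ 0)
            = Complex.exp ((-2) * (Real.pi : ℂ) * Complex.I * ((inner ℝ lam μ : ℝ) : ℂ)) *
                (chi W ε ρ c μ lam / chi W ε ρ c μ 0)) :=
  chi_shift_ratio_general W ε ρ lam μ c hint₁ hint₂
end

section
/- Let N, u, v be positive integers with gcd(v, N·u) = 1. Let λ, ν, μ ∈ V, let φ_1, …, φ_n ∈ V, and let N_1, …, N_n be integers. Assume: (a) N · ⟪α + ρ, w(μ + ρ)⟫ ∈ ℤ for every w ∈ W and every α ∈ {0, λ, ν, φ_1, …, φ_n}; (b) χ_μ(1/u; 0) ≠ 0; and (c) χ_μ(1/u; λ) · χ_μ(1/u; ν) = ∑_{i=1}^n N_i · χ_μ(1/u; φ_i) · χ_μ(1/u; 0). Then χ_μ(v/u; 0) ≠ 0 and χ_μ(v/u; λ) · χ_μ(v/u; ν) = ∑_{i=1}^n N_i · χ_μ(v/u; φ_i) · χ_μ(v/u; 0). (This Galois transport of the integer-level Verlinde relation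 from the coefficient 1/u to the coefficient v/u is the core of the proof of the second fusion rule of Theorem 6.1 and of Corollary 8.2.) -/
/-!
With `ζ = exp(2πi/(Nu))`, the integrality hypothesis makes `χ_μ(k/u; α)` the value at `ζ^k` of
a fixed Laurent polynomial with integer coefficients. So `χ_μ(1/u; -)` and `χ_μ(v/u; -)` are the
images of one family of elements of the cyclotomic field `ℚ(ζ) = ℚ[X]/(Φ_{Nu})` under the two
embeddings sending `X` to the primitive roots `ζ` and `ζ^v`. Embeddings of a field are injective,
so the Verlinde relation and the non-vanishing pass from the first embedding to the field and
from the field to the second one.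
-/

open scoped BigOperators

open Polynomial Complex
open scoped Real

instance {M : ℕ} [NeZero M] : Fact (Irreducible (cyclotomic M ℚ)) :=
  ⟨cyclotomic.irreducible_rat (NeZero.pos M)⟩

section CyclotomicEval

variable {L : Type*} [Field L] [CharZero L] {M : ℕ} [NeZero M] {z : L}

noncomputable def cyclotomicEval (hz : IsPrimitiveRoot z M) :
    AdjoinRoot (cyclotomic M ℚ) →+* L :=
  AdjoinRoot.lift (algebraMap ℚ L) z <| by
    rw [eval₂_eq_eval_map, map_cyclotomic]
    exact isRoot_cyclotomic_iff.mpr hz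

theorem cyclotomicEval_sum_intCast_mul_root_zpow (hz : IsPrimitiveRoot z M) {ι : Type*}
    (s : Finset ι) (c m : ι → ℤ) :
    cyclotomicEval hz (∑ i ∈ s, (c i : AdjoinRoot (cyclotomic M ℚ)) *
      AdjoinRoot.root (cyclotomic M ℚ) ^ m i)
      = ∑ i ∈ s, (c i : L) * z ^ m i := by
  simp [cyclotomicEval, map_zpow₀]

end CyclotomicEval

section WeylCharacter

variable {V : Type*} [NormedAddCommGroup V] [InnerProductSpace ℝ V]
  (W : Subgroup (V ≃ₗᵢ[ℝ] V)) [Fintype W] (ε : W →* ℤˣ) (ρ : V)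

theorem chi_natCast_div_eq_sum_zpow {N u : ℕ} (hN : N ≠ 0) (hu : u ≠ 0) (μ α : V) (m : W → ℤ)
    (hm : ∀ w : W, (N : ℝ) * inner ℝ (α + ρ) ((w : V ≃ₗᵢ[ℝ] V) (μ + ρ)) = m w) (k : ℕ) :
    chi W ε ρ ((k : ℝ) / u) μ α
      = ∑ w : W, ((ε w : ℤ) : ℂ) * (exp (2 * π * I / (N * u : ℕ)) ^ k) ^ (-m w) := by
  refine Finset.sum_congr rfl fun w _ => ?_
  rw [← zpow_natCast, ← zpow_mul, ← exp_int_mul]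
  have hmw : (m w : ℂ) = N * (inner ℝ (α + ρ) ((w : V ≃ₗᵢ[ℝ] V) (μ + ρ)) : ℂ) := by
    exact_mod_cast (hm w).symm
  have hNC : (N : ℂ) ≠ 0 := Nat.cast_ne_zero.mpr hN
  have huC : (u : ℂ) ≠ 0 := Nat.cast_ne_zero.mpr hu
  push_cast [hmw]
  field_simp

theorem exists_cyclotomicEval_eq_chi {N u : ℕ} [NeZero N] [NeZero u] (μ α : V)
    (hα : ∀ w : W, ∃ m : ℤ, (N : ℝ) * inner ℝ (α + ρ) ((w : V ≃ₗᵢ[ℝ] V) (μ + ρ)) = m) :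
    ∃ x : AdjoinRoot (cyclotomic (N * u) ℚ), ∀ (k : ℕ)
      (hk : IsPrimitiveRoot (exp (2 * π * I / (N * u : ℕ)) ^ k) (N * u)),
        cyclotomicEval hk x = chi W ε ρ ((k : ℝ) / u) μ α := by
  choose m hm using hα
  refine ⟨∑ w : W, ((ε w : ℤ) : AdjoinRoot _) * AdjoinRoot.root (cyclotomic (N * u) ℚ) ^ (-m w),
    fun k hk => ?_⟩
  rw [cyclotomicEval_sum_intCast_mul_root_zpow,
    chi_natCast_div_eq_sum_zpow W ε ρ (NeZero.ne N) (NeZero.ne u) μ α m hm]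

end WeylCharacter

theorem chi_verlinde_galois_transport_general {V : Type*} [NormedAddCommGroup V]
    [InnerProductSpace ℝ V]
    (W : Subgroup (V ≃ₗᵢ[ℝ] V)) [Fintype W] (ε : W →* ℤˣ) (ρ : V)
    (N u v : ℕ) (hN : 0 < N) (hu : 0 < u)
    (hcop : Nat.gcd v (N * u) = 1)
    (lam ν μ : V) (n : ℕ) (φ : Fin n → V) (Nc : Fin n → ℤ)
    (hint : ∀ w : W, ∀ α ∈ insert (0 : V) (insert lam (insert ν (Set.range φ))),
      ∃ m : ℤ, (N : ℝ) * (inner ℝ (α + ρ) ((w : V ≃ₗᵢ[ℝ] V) (μ + ρ)) : ℝ) = m)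
    (hne : chi W ε ρ (1 / (u : ℝ)) μ 0 ≠ 0)
    (hrel : chi W ε ρ (1 / (u : ℝ)) μ lam * chi W ε ρ (1 / (u : ℝ)) μ ν
      = ∑ i : Fin n, (Nc i : ℂ) * chi W ε ρ (1 / (u : ℝ)) μ (φ i)
          * chi W ε ρ (1 / (u : ℝ)) μ 0) :
    chi W ε ρ ((v : ℝ) / (u : ℝ)) μ 0 ≠ 0
      ∧ chi W ε ρ ((v : ℝ) / (u : ℝ)) μ lam * chi W ε ρ ((v : ℝ) / (u : ℝ)) μ ν
        = ∑ i : Fin n, (Nc i : ℂ) * chi W ε ρ ((v : ℝ) / (u : ℝ)) μ (φ i)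
            * chi W ε ρ ((v : ℝ) / (u : ℝ)) μ 0 := by
  have : NeZero N := ⟨hN.ne'⟩
  have : NeZero u := ⟨hu.ne'⟩
  have hζ := isPrimitiveRoot_exp (N * u) (NeZero.ne _)
  have hζ1 : IsPrimitiveRoot (exp (2 * π * I / (N * u : ℕ)) ^ 1) (N * u) := by rwa [pow_one]
  have hζv := hζ.pow_of_coprime v hcop
  choose x hx using fun α (hα : α ∈ insert (0 : V) (insert lam (insert ν (Set.range φ)))) =>
    exists_cyclotomicEval_eq_chi W ε ρ (u := u) μ α (hint · α hα)
  have hx1 α hα : cyclotomicEval hζ1 (x α hα) = chi W ε ρ (1 / (u : ℝ)) μ α := by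
    simpa using hx α hα 1 hζ1
  have hxv α hα := hx α hα v hζv
  have hrelK : x lam (by simp) * x ν (by simp)
      = ∑ i, (Nc i : AdjoinRoot _) * x (φ i) (by simp) * x 0 (by simp) :=
    (cyclotomicEval hζ1).injective <| by
      simp only [map_mul, map_sum, map_intCast, hx1]
      exact hrel
  refine ⟨?_, ?_⟩
  · rw [← hxv 0 (by simp), _root_.map_ne_zero]
    rwa [← _root_.map_ne_zero (cyclotomicEval hζ1), hx1]
  · simpa only [map_mul, map_sum, map_intCast, hxv] using congrArg (cyclotomicEval hζv) hrelK

/-- Galois transport of the integer-level Verlinde relation from coefficient `1/u` to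
coefficient `v/u`: if `gcd(v, Nu) = 1`, the relevant pairings are `1/N`-integral,
`χ_μ(1/u; 0) ≠ 0` and
`χ_μ(1/u; λ) χ_μ(1/u; ν) = ∑ᵢ Nᵢ χ_μ(1/u; φᵢ) χ_μ(1/u; 0)`, then
`χ_μ(v/u; 0) ≠ 0` and
`χ_μ(v/u; λ) χ_μ(v/u; ν) = ∑ᵢ Nᵢ χ_μ(v/u; φᵢ) χ_μ(v/u; 0)`. -/
theorem chi_verlinde_galois_transport {V : Type*} [NormedAddCommGroup V]
    [InnerProductSpace ℝ V] [FiniteDimensional ℝ V]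
    (W : Subgroup (V ≃ₗᵢ[ℝ] V)) [Fintype W] (ε : W →* ℤˣ) (ρ : V)
    (N u v : ℕ) (hN : 0 < N) (hu : 0 < u) (hv : 0 < v)
    (hcop : Nat.gcd v (N * u) = 1)
    (lam ν μ : V) (n : ℕ) (φ : Fin n → V) (Nc : Fin n → ℤ)
    (hint : ∀ w : W, ∀ α ∈ insert (0 : V) (insert lam (insert ν (Set.range φ))),
      ∃ m : ℤ, (N : ℝ) * (inner ℝ (α + ρ) ((w : V ≃ₗᵢ[ℝ] V) (μ + ρ)) : ℝ) = m)
    (hne : chi W ε ρ (1 / (u : ℝ)) μ 0 ≠ 0)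
    (hrel : chi W ε ρ (1 / (u : ℝ)) μ lam * chi W ε ρ (1 / (u : ℝ)) μ ν
      = ∑ i : Fin n, (Nc i : ℂ) * chi W ε ρ (1 / (u : ℝ)) μ (φ i)
          * chi W ε ρ (1 / (u : ℝ)) μ 0) :
    chi W ε ρ ((v : ℝ) / (u : ℝ)) μ 0 ≠ 0
      ∧ chi W ε ρ ((v : ℝ) / (u : ℝ)) μ lam * chi W ε ρ ((v : ℝ) / (u : ℝ)) μ ν
        = ∑ i : Fin n, (Nc i : ℂ) * chi W ε ρ ((v : ℝ) / (u : ℝ)) μ (φ i)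
            * chi W ε ρ ((v : ℝ) / (u : ℝ)) μ 0 :=
  chi_verlinde_galois_transport_general W ε ρ N u v hN hu hcop lam ν μ n φ Nc hint hne hrel
end
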